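/- Let p = N(0, I_d) be the standard Gaussian on ℝ^d (whose score is ∇ log p(x) = −x) and let p* = N(0, σ² I_d) with σ² = 6/11. For every k > 1 there exists a constant c > 0 depending only on k such that for every d ≥ 1 and every ε ∈ (0,1) there exists a measurable function ŝ : ℝ^d → ℝ^d with E_{x∼p}[ ‖ŝ(x) − ∇ log p(x)‖^k ] ≤ ε^k, and yet P_{x∼p*}[ ‖ŝ(x) − ∇ log p(x)‖ ≥ e^{c·d}·ε ] ≥ 1 − 2·e^{−c·d}. -/

import Mathlib

open MeasureTheory

/-- The density of the isotropic Gaussian `N(0, σ² I_d)` on `ℝ^d`. -/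
noncomputable def gaussDensity (d : ℕ) (σ2 : ℝ) (x : EuclideanSpace ℝ (Fin d)) : ℝ :=
  (2 * Real.pi * σ2) ^ (-(d : ℝ) / 2) * Real.exp (-‖x‖ ^ 2 / (2 * σ2))

/-- The isotropic Gaussian measure `N(0, σ² I_d)` on `ℝ^d`. -/
noncomputable def gaussMeasure (d : ℕ) (σ2 : ℝ) : Measure (EuclideanSpace ℝ (Fin d)) :=
  volume.withDensity fun x => ENNReal.ofReal (gaussDensity d σ2 x)

/-!
Perturb the exact score `-x` by a constant of size `e^{cd} ε` on the set `‖x‖² ≤ 3d/4` only.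
Chernoff bounds with the Gaussian moment generating function
`E exp(-l‖x‖²) = (1 + 2lσ²)^{-d/2}` show that this set has `N(0, I)`-mass at most `e^{-d/112}`,
which pays for the factor `e^{cdk} = e^{d/112}` in the `L^k` error when `c = 1/(112k)`, while its
complement has `N(0, (6/11) I)`-mass at most `e^{-d/112}`.
-/

theorem integrable_exp_neg_mul_sq_norm {V : Type*} [NormedAddCommGroup V]
    [InnerProductSpace ℝ V] [FiniteDimensional ℝ V] [MeasurableSpace V] [BorelSpace V]
    {b : ℝ} (hb : 0 < b) : Integrable fun x : V => Real.exp (-b * ‖x‖ ^ 2) :=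
  .of_integral_ne_zero <| by
    rw [GaussianFourier.integral_rexp_neg_mul_sq_norm hb]
    exact (Real.rpow_pos_of_pos (div_pos Real.pi_pos hb) _).ne'

theorem gaussDensity_nonneg (d : ℕ) {σ2 : ℝ} (hσ : 0 < σ2) (x : EuclideanSpace ℝ (Fin d)) :
    0 ≤ gaussDensity d σ2 x := by
  unfold gaussDensity; positivity

theorem lintegral_exp_mul_gaussDensity (d : ℕ) {σ2 l : ℝ} (hσ : 0 < σ2)
    (hl : 0 < 1 + 2 * l * σ2) :
    ∫⁻ x, ENNReal.ofReal (Real.exp (-l * ‖x‖ ^ 2) * gaussDensity d σ2 x)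
      = ENNReal.ofReal ((1 + 2 * l * σ2) ^ (-(d : ℝ) / 2)) := by
  obtain ⟨b, hb, hbσ⟩ : ∃ b > 0, b * (2 * σ2) = 1 + 2 * l * σ2 :=
    ⟨_, by positivity, div_mul_cancel₀ _ (by positivity)⟩
  have hprod : ∀ x : EuclideanSpace ℝ (Fin d),
      Real.exp (-l * ‖x‖ ^ 2) * gaussDensity d σ2 x
        = (2 * Real.pi * σ2) ^ (-(d : ℝ) / 2) * Real.exp (-b * ‖x‖ ^ 2) := by
    intro x
    rw [gaussDensity, mul_left_comm, ← Real.exp_add]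
    congr 2
    field_simp
    linear_combination ‖x‖ ^ 2 * hbσ
  simp_rw [hprod]
  rw [← ofReal_integral_eq_lintegral_ofReal ((integrable_exp_neg_mul_sq_norm hb).const_mul _)
      (.of_forall fun x => by positivity),
    integral_const_mul, GaussianFourier.integral_rexp_neg_mul_sq_norm hb, finrank_euclideanSpace,
    Fintype.card_fin, neg_div, Real.rpow_neg (by positivity), Real.rpow_neg hl.le,
    ← Real.inv_rpow (by positivity), ← Real.inv_rpow hl.le,
    ← Real.mul_rpow (by positivity) (by positivity), ← hbσ]
  congr 2
  field_simp

theorem isProbabilityMeasure_gaussMeasure (d : ℕ) {σ2 : ℝ} (hσ : 0 < σ2) :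
    IsProbabilityMeasure (gaussMeasure d σ2) := by
  constructor
  rw [gaussMeasure, withDensity_apply _ MeasurableSet.univ, Measure.restrict_univ]
  simpa using lintegral_exp_mul_gaussDensity d (l := 0) hσ (by norm_num)

/-- Chernoff bound: on `S` the weight `exp (a - l‖x‖²)` is at least `1`. -/
theorem gaussMeasure_le_of_forall_mul_sq_norm_le (d : ℕ) {σ2 l a : ℝ} (hσ : 0 < σ2)
    (hl : 0 < 1 + 2 * l * σ2) {S : Set (EuclideanSpace ℝ (Fin d))} (hS : MeasurableSet S)
    (hSl : ∀ x ∈ S, l * ‖x‖ ^ 2 ≤ a) :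
    gaussMeasure d σ2 S
      ≤ ENNReal.ofReal (Real.exp a * (1 + 2 * l * σ2) ^ (-(d : ℝ) / 2)) := by
  have hweight : ∀ x, S.indicator (fun x => ENNReal.ofReal (gaussDensity d σ2 x)) x
      ≤ ENNReal.ofReal (Real.exp a) *
          ENNReal.ofReal (Real.exp (-l * ‖x‖ ^ 2) * gaussDensity d σ2 x) := by
    intro x
    by_cases hx : x ∈ S
    · rw [Set.indicator_of_mem hx, ← ENNReal.ofReal_mul (Real.exp_nonneg a), ← mul_assoc,
        ← Real.exp_add]
      refine ENNReal.ofReal_le_ofReal (le_mul_of_one_le_left (gaussDensity_nonneg d hσ x) ?_)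
      exact Real.one_le_exp (by linarith [hSl x hx])
    · simp [Set.indicator_of_notMem hx]
  calc gaussMeasure d σ2 S
      = ∫⁻ x, S.indicator (fun x => ENNReal.ofReal (gaussDensity d σ2 x)) x := by
        rw [gaussMeasure, withDensity_apply _ hS, lintegral_indicator hS]
    _ ≤ ∫⁻ x, ENNReal.ofReal (Real.exp a) *
          ENNReal.ofReal (Real.exp (-l * ‖x‖ ^ 2) * gaussDensity d σ2 x) :=
        lintegral_mono hweight
    _ = _ := by
        rw [lintegral_const_mul' _ _ ENNReal.ofReal_ne_top, lintegral_exp_mul_gaussDensity d hσ hl,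
          ← ENNReal.ofReal_mul (Real.exp_nonneg a)]

theorem one_div_seven_le_log_seven_div_six : (1 : ℝ) / 7 ≤ Real.log (7 / 6) := by
  have h := Real.log_le_sub_one_of_pos (show (0 : ℝ) < 6 / 7 by norm_num)
  rw [show (6 : ℝ) / 7 = (7 / 6)⁻¹ by norm_num, Real.log_inv] at h
  linarith

theorem log_eleven_div_eight_le_one_div_three : Real.log (11 / 8) ≤ (1 : ℝ) / 3 := by
  rw [Real.log_le_iff_le_exp (by norm_num)]
  refine le_of_pow_le_pow_left₀ three_ne_zero (Real.exp_pos _).le ?_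
  rw [← Real.exp_nat_mul]
  norm_num
  linarith [Real.exp_one_gt_d9]

/-- Since `E‖x‖² = d` under `N(0, I)` and `6d/11` under `N(0, (6/11) I)`, the threshold `3d/4`
separates the two measures exponentially in `d`. -/
def spikeSet (d : ℕ) : Set (EuclideanSpace ℝ (Fin d)) := {x | ‖x‖ ^ 2 ≤ 3 * d / 4}

theorem measurableSet_spikeSet (d : ℕ) : MeasurableSet (spikeSet d) :=
  measurableSet_le (by fun_prop) measurable_const

theorem gaussMeasure_one_spikeSet_le (d : ℕ) :
    gaussMeasure d 1 (spikeSet d) ≤ ENNReal.ofReal (Real.exp (-d / 112)) := by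
  refine (gaussMeasure_le_of_forall_mul_sq_norm_le d (l := 1 / 12) (a := d / 16) one_pos
    (by norm_num) (measurableSet_spikeSet d) fun x hx => by linarith [hx.out]).trans
    (ENNReal.ofReal_le_ofReal ?_)
  rw [Real.rpow_def_of_pos (by norm_num), ← Real.exp_add, Real.exp_le_exp]
  norm_num
  nlinarith [mul_le_mul_of_nonneg_left one_div_seven_le_log_seven_div_six (Nat.cast_nonneg d)]

theorem one_sub_exp_le_gaussMeasure_six_div_eleven_spikeSet (d : ℕ) :
    1 - ENNReal.ofReal (Real.exp (-d / 112)) ≤ gaussMeasure d (6 / 11) (spikeSet d) := by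
  have := isProbabilityMeasure_gaussMeasure d (σ2 := 6 / 11) (by norm_num)
  rw [← compl_compl (spikeSet d), prob_compl_eq_one_sub (measurableSet_spikeSet d).compl]
  gcongr
  refine (gaussMeasure_le_of_forall_mul_sq_norm_le d (l := -1 / 4) (a := -(3 * d / 16))
    (by norm_num) (by norm_num) (measurableSet_spikeSet d).compl
    fun x hx => by linarith [not_le.mp (Set.notMem_ofPred_iff.mp hx)]).trans
    (ENNReal.ofReal_le_ofReal ?_)
  rw [Real.rpow_def_of_pos (by norm_num), ← Real.exp_add, Real.exp_le_exp]
  norm_num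
  rw [show (8 : ℝ) / 11 = (11 / 8)⁻¹ by norm_num, Real.log_inv]
  nlinarith [mul_le_mul_of_nonneg_left log_eleven_div_eight_le_one_div_three (Nat.cast_nonneg d)]

section SpikedScore

variable {E : Type*} [NormedAddCommGroup E]

noncomputable def spikedScore (A : Set E) (v x : E) : E := -x + A.indicator (fun _ => v) x

theorem spikedScore_sub_neg (A : Set E) (v x : E) :
    spikedScore A v x - -x = A.indicator (fun _ => v) x :=
  add_sub_cancel_left _ _

theorem measurable_spikedScore [MeasurableSpace E] [MeasurableNeg E] [MeasurableAdd₂ E]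
    {A : Set E} (hA : MeasurableSet A) (v : E) : Measurable (spikedScore A v) :=
  measurable_neg.add (measurable_const.indicator hA)

theorem integral_norm_spikedScore_sub_neg_rpow [MeasurableSpace E] {μ : Measure E} {A : Set E}
    (hA : MeasurableSet A) (v : E) {k : ℝ} (hk : 0 < k) :
    ∫ x, ‖spikedScore A v x - -x‖ ^ k ∂μ = μ.real A * ‖v‖ ^ k := by
  have hpow : ∀ x, ‖spikedScore A v x - -x‖ ^ k = A.indicator (fun _ => ‖v‖ ^ k) x := by
    intro x
    rw [spikedScore_sub_neg]
    by_cases hx : x ∈ A <;> simp [hx, Real.zero_rpow hk.ne']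
  simp_rw [hpow]
  rw [integral_indicator_const _ hA, smul_eq_mul]

theorem subset_setOf_norm_le_norm_spikedScore_sub_neg (A : Set E) (v : E) :
    A ⊆ {x | ‖v‖ ≤ ‖spikedScore A v x - -x‖} := fun x hx => by
  rw [Set.mem_ofPred_eq, spikedScore_sub_neg, Set.indicator_of_mem hx]

end SpikedScore

theorem integral_norm_spikedScore_spikeSet_sub_neg_rpow_le (d : ℕ)
    (v : EuclideanSpace ℝ (Fin d)) {k : ℝ} (hk : 0 < k) :
    ∫ x, ‖spikedScore (spikeSet d) v x - -x‖ ^ k ∂gaussMeasure d 1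
      ≤ Real.exp (-d / 112) * ‖v‖ ^ k := by
  rw [integral_norm_spikedScore_sub_neg_rpow (measurableSet_spikeSet d) v hk]
  exact mul_le_mul_of_nonneg_right (ENNReal.toReal_le_of_le_ofReal (by positivity)
    (gaussMeasure_one_spikeSet_le d)) (by positivity)

/-- Let `p = N(0, I_d)` (score `−x`) and `p* = N(0, (6/11) I_d)`.
For every `k > 1` there is `c > 0` (depending only on `k`) such that for every `d ≥ 1`
and `ε ∈ (0,1)` there is a measurable `ŝ` with `E_{x∼p}‖ŝ(x) − (−x)‖^k ≤ ε^k` yet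
`P_{x∼p*}[‖ŝ(x) − (−x)‖ ≥ e^{cd} ε] ≥ 1 − 2e^{−cd}`. -/
theorem lp_score_error_amplification (k : ℝ) (hk : 1 < k) :
    ∃ c > (0 : ℝ), ∀ d : ℕ, 1 ≤ d → ∀ ε : ℝ, ε ∈ Set.Ioo (0 : ℝ) 1 →
      ∃ shat : EuclideanSpace ℝ (Fin d) → EuclideanSpace ℝ (Fin d),
        Measurable shat ∧
        (∫ x, ‖shat x - (-x)‖ ^ k ∂gaussMeasure d 1) ≤ ε ^ k ∧
        ENNReal.ofReal (1 - 2 * Real.exp (-c * d)) ≤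
          gaussMeasure d (6 / 11) {x | Real.exp (c * d) * ε ≤ ‖shat x - (-x)‖} := by
  refine ⟨1 / (112 * k), by positivity, fun d hd ε hε => ?_⟩
  obtain ⟨hε0, -⟩ := hε
  obtain ⟨u, hu⟩ : ∃ u : EuclideanSpace ℝ (Fin d), ‖u‖ = 1 :=
    ⟨EuclideanSpace.single ⟨0, hd⟩ 1, by simp⟩
  set M := Real.exp (1 / (112 * k) * d)
  set v := (M * ε) • u
  have hv : ‖v‖ = M * ε := by
    rw [norm_smul, hu, mul_one, Real.norm_of_nonneg (by positivity)]
  have hMk : M ^ k = Real.exp (d / 112) := by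
    rw [← Real.exp_mul]; congr 1; field_simp
  refine ⟨spikedScore (spikeSet d) v, measurable_spikedScore (measurableSet_spikeSet d) v, ?_, ?_⟩
  · calc _ ≤ Real.exp (-d / 112) * ‖v‖ ^ k :=
          integral_norm_spikedScore_spikeSet_sub_neg_rpow_le d v (by linarith)
      _ = ε ^ k := by
          rw [hv, Real.mul_rpow (by positivity) hε0.le, hMk, ← mul_assoc, ← Real.exp_add,
            neg_div, neg_add_cancel, Real.exp_zero, one_mul]
  · have hexp : Real.exp (-d / 112) ≤ Real.exp (-(1 / (112 * k)) * d) := by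
      have hc : 1 / (112 * k) ≤ 1 / 112 := one_div_le_one_div_of_le (by norm_num) (by linarith)
      rw [Real.exp_le_exp]
      nlinarith [mul_le_mul_of_nonneg_right hc (Nat.cast_nonneg d)]
    calc ENNReal.ofReal (1 - 2 * Real.exp (-(1 / (112 * k)) * d))
        ≤ 1 - ENNReal.ofReal (Real.exp (-d / 112)) := by
          rw [← ENNReal.ofReal_one, ← ENNReal.ofReal_sub _ (Real.exp_pos _).le]
          exact ENNReal.ofReal_le_ofReal (by linarith [Real.exp_pos (-d / 112)])
      _ ≤ gaussMeasure d (6 / 11) (spikeSet d) :=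
          one_sub_exp_le_gaussMeasure_six_div_eleven_spikeSet d
      _ ≤ _ := hv ▸ measure_mono (subset_setOf_norm_le_norm_spikedScore_sub_neg _ _)
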